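/- arXiv:2102.10445 — 4 statements merged into one kernel-verified Lean document; each statement's English description precedes it below -/
import Mathlib

section
/- Let Γ and Λ be finitely generated groups whose profinite completions are isomorphic, and let p be a prime. Then the sets of conjugacy classes of representations Γ → SL(2, F̄_p) and Λ → SL(2, F̄_p) are in bijection; in particular, they have the same cardinality. -/
/-
Over a finite field `F`, the entries of finitely many matrices in `SL(n, F̄)` generate a finite
subring, so a finitely generated group has finite image in `SL(n, F̄)`. Hence every
representation of `G` factors through a finite quotient and extends uniquely to a homomorphism
`Ĝ → SL(n, F̄)` with open kernel; conversely such a homomorphism restricts along `ι : G → Ĝ`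
(uniqueness because `ι G` is dense). A continuous isomorphism `Ĝ ≃ Ĥ` thus transports
representations of `G` to those of `H`, and since everything commutes with post-composition by
an automorphism of the target, conjugate representations go to conjugate ones.
-/

/-- Finite-index normal subgroups of `G`, ordered by reverse inclusion. -/
def FinIndexNormal (G : Type) [Group G] : Type :=
  {N : Subgroup G // N.Normal ∧ N.FiniteIndex}

instance (G : Type) [Group G] : PartialOrder (FinIndexNormal G) :=
  PartialOrder.lift (fun N => OrderDual.toDual N.1)
    (fun _ _ h => Subtype.ext (OrderDual.toDual.injective h))

instance (G : Type) [Group G] (N : FinIndexNormal G) : N.1.Normal := N.2.1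

/-- The profinite completion of `G`, as the subgroup of the product of all finite
quotients `G ⧸ N` consisting of the compatible families. -/
def profiniteCompletionSubgroup (G : Type) [Group G] :
    Subgroup (∀ N : FinIndexNormal G, G ⧸ N.1) where
  carrier := {x | ∀ (N M : FinIndexNormal G) (h : M.1 ≤ N.1),
    QuotientGroup.map M.1 N.1 (MonoidHom.id G) h (x M) = x N}
  one_mem' := by intro N M h; simp
  mul_mem' := by
    intro x y hx hy N M h
    simp only [Pi.mul_apply, map_mul, hx N M h, hy N M h]
  inv_mem' := by
    intro x hx N M h
    simp only [Pi.inv_apply, map_inv, hx N M h]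

/-- The profinite completion of `G`. -/
def ProfiniteCompletion (G : Type) [Group G] : Type :=
  profiniteCompletionSubgroup G

instance (G : Type) [Group G] : Group (ProfiniteCompletion G) :=
  inferInstanceAs (Group (profiniteCompletionSubgroup G))

/-- Each finite quotient carries the discrete topology. -/
instance (G : Type) [Group G] (N : FinIndexNormal G) : TopologicalSpace (G ⧸ N.1) := ⊥

/-- The profinite completion carries the inverse limit topology, i.e. the topology
induced from the product of the discrete finite quotients. -/
instance (G : Type) [Group G] : TopologicalSpace (ProfiniteCompletion G) :=
  inferInstanceAs (TopologicalSpace (profiniteCompletionSubgroup G))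

/-- The canonical map `ι : G → Ĝ`, sending `g` to the family of its cosets. -/
def iotaCompletion (G : Type) [Group G] : G →* ProfiniteCompletion G where
  toFun g := ⟨fun N => QuotientGroup.mk g, by
    intro N M h
    rfl⟩
  map_one' := Subtype.ext (funext fun N => rfl)
  map_mul' x y := Subtype.ext (funext fun N => rfl)

/-- The conjugacy relation on representations `G → SL(2, k)`. -/
def repConjSetoid (G : Type) [Group G] (k : Type) [CommRing k] :
    Setoid (G →* Matrix.SpecialLinearGroup (Fin 2) k) where
  r ρ σ := ∃ C : Matrix.SpecialLinearGroup (Fin 2) k, ∀ g : G, C * ρ g * C⁻¹ = σ g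
  iseqv := by
    refine ⟨fun ρ => ⟨1, fun g => by group⟩, ?_, ?_⟩
    · rintro ρ σ ⟨C, h⟩
      exact ⟨C⁻¹, fun g => by rw [← h g]; group⟩
    · rintro ρ σ τ ⟨C, h⟩ ⟨D, h'⟩
      exact ⟨D * C, fun g => by rw [← h' g, ← h g]; group⟩

/-- The set of conjugacy classes of representations `G → SL(2, k)`. -/
def RepConjClasses (G : Type) [Group G] (k : Type) [CommRing k] : Type :=
  Quotient (repConjSetoid G k)

namespace Matrix.SpecialLinearGroup

variable {n k : Type} [Fintype n] [DecidableEq n] [CommRing k]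

lemma mem_range_map_subtype_of_forall_mem {R : Subring k} (A : SpecialLinearGroup n k)
    (hA : ∀ i j, A i j ∈ R) : A ∈ (map R.subtype).range := by
  let M : Matrix n n R := Matrix.of fun i j => ⟨A i j, hA i j⟩
  have hM : M.map R.subtype = A := rfl
  have hdet : M.det = 1 := Subtype.ext <| by
    rw [← R.coe_subtype, RingHom.map_det, RingHom.mapMatrix_apply, hM, A.det_coe]
    rfl
  exact ⟨⟨M, hdet⟩, Subtype.ext hM⟩

theorem finite_closure_of_isIntegral {F : Type} [CommRing F] [Finite F] [Algebra F k]
    [Algebra.IsIntegral F k] {S : Set (SpecialLinearGroup n k)} (hS : S.Finite) :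
    Finite (Subgroup.closure S) := by
  let E : Set k := ⋃ A ∈ S, Set.range fun ij : n × n => A ij.1 ij.2
  have hE : E.Finite := hS.biUnion fun A _ => Set.finite_range _
  let R := Algebra.adjoin F E
  have : Module.Finite F R := ⟨(Submodule.fg_top _).mpr <|
    fg_adjoin_of_finite hE fun x _ => Algebra.IsIntegral.isIntegral x⟩
  have : Finite R := Module.finite_of_finite F
  have hle : Subgroup.closure S ≤ (map R.toSubring.subtype).range :=
    (Subgroup.closure_le _).mpr fun A hA => mem_range_map_subtype_of_forall_mem A fun i j =>
      Algebra.subset_adjoin <| Set.mem_biUnion hA ⟨(i, j), rfl⟩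
  have : Finite (map R.toSubring.subtype : _ →* SpecialLinearGroup n k).range :=
    (Set.finite_range _).to_subtype
  exact Finite.of_injective _ (Subgroup.inclusion_injective hle)

theorem finiteIndex_ker_of_fg {F : Type} [CommRing F] [Finite F] [Algebra F k]
    [Algebra.IsIntegral F k] {G : Type} [Group G] (hG : Group.FG G)
    (ρ : G →* SpecialLinearGroup n k) : ρ.ker.FiniteIndex := by
  obtain ⟨S, hS, hSfin⟩ := (Subgroup.fg_iff ⊤).1 hG.out
  have : Finite ρ.range := by
    rw [MonoidHom.range_eq_map, ← hS, MonoidHom.map_closure]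
    exact finite_closure_of_isIntegral (F := F) (hSfin.image ρ)
  exact Subgroup.finiteIndex_ker ρ

end Matrix.SpecialLinearGroup

section OpenKernel

variable {A B K : Type} [Group A] [TopologicalSpace A] [Group B] [TopologicalSpace B] [Group K]

def openKerHomCongr (e : A ≃ₜ* B) :
    {φ : A →* K // IsOpen (φ.ker : Set A)} ≃ {ψ : B →* K // IsOpen (ψ.ker : Set B)} where
  toFun φ := ⟨φ.1.comp e.symm.toMonoidHom, φ.2.preimage e.symm.continuous⟩
  invFun ψ := ⟨ψ.1.comp e.toMonoidHom, ψ.2.preimage e.continuous⟩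
  left_inv φ := Subtype.ext <| MonoidHom.ext fun x => congrArg φ.1 (e.symm_apply_apply x)
  right_inv ψ := Subtype.ext <| MonoidHom.ext fun y => congrArg ψ.1 (e.apply_symm_apply y)

end OpenKernel

def FinIndexNormal.biInf {G : Type} [Group G] (I : Finset (FinIndexNormal G)) :
    FinIndexNormal G :=
  ⟨⨅ N ∈ I, N.1,
    Subgroup.normal_iInf_normal fun N => Subgroup.normal_iInf_normal fun _ => N.2.1,
    Subgroup.finiteIndex_iInf' _ fun N _ => N.2.2⟩

namespace ProfiniteCompletion

variable {G K : Type} [Group G] [Group K]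

instance (N : FinIndexNormal G) : DiscreteTopology (G ⧸ N.1) := ⟨rfl⟩

instance : IsTopologicalGroup (ProfiniteCompletion G) :=
  inferInstanceAs (IsTopologicalGroup (profiniteCompletionSubgroup G))

def proj (N : FinIndexNormal G) : ProfiniteCompletion G →* G ⧸ N.1 :=
  (Pi.evalMonoidHom (fun N : FinIndexNormal G => G ⧸ N.1) N).comp
    (profiniteCompletionSubgroup G).subtype

lemma proj_iotaCompletion (N : FinIndexNormal G) (g : G) :
    proj N (iotaCompletion G g) = g := rfl

lemma continuous_proj (N : FinIndexNormal G) : Continuous (proj N) :=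
  (continuous_apply N).comp continuous_subtype_val

lemma isOpen_ker_proj (N : FinIndexNormal G) :
    IsOpen ((proj N).ker : Set (ProfiniteCompletion G)) :=
  (isOpen_discrete {1}).preimage (continuous_proj N)

lemma exists_ker_proj_subset {W : Set (ProfiniteCompletion G)} (hW : IsOpen W)
    (h1 : 1 ∈ W) : ∃ N : FinIndexNormal G, ((proj N).ker : Set _) ⊆ W := by
  obtain ⟨W', hW', rfl⟩ := isOpen_induced_iff.mp hW
  obtain ⟨I, u, hu, hsub⟩ := isOpen_pi_iff.mp hW' _ h1
  refine ⟨FinIndexNormal.biInf I, fun x hx => hsub fun N hN => ?_⟩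
  have hle : (FinIndexNormal.biInf I).1 ≤ N.1 := biInf_le (fun M : FinIndexNormal G => M.1) hN
  rw [← x.2 N _ hle, show x.1 (FinIndexNormal.biInf I) = 1 from hx, map_one]
  exact (hu N hN).2

lemma hom_ext_of_isOpen_ker {φ ψ : ProfiniteCompletion G →* K}
    (hφ : IsOpen (φ.ker : Set (ProfiniteCompletion G)))
    (hψ : IsOpen (ψ.ker : Set (ProfiniteCompletion G)))
    (h : φ.comp (iotaCompletion G) = ψ.comp (iotaCompletion G)) : φ = ψ := by
  obtain ⟨N, hN⟩ := exists_ker_proj_subset (hφ.inter hψ) ⟨φ.ker.one_mem, ψ.ker.one_mem⟩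
  ext x
  obtain ⟨g, hg⟩ := QuotientGroup.mk_surjective (proj N x)
  have hx : (iotaCompletion G g)⁻¹ * x ∈ (proj N).ker := by
    rw [(proj N).mem_ker, map_mul, map_inv, proj_iotaCompletion, hg, inv_mul_cancel]
  calc φ x = φ (iotaCompletion G g) := ((φ.eq_iff).mpr (hN hx).1)
    _ = ψ (iotaCompletion G g) := DFunLike.congr_fun h g
    _ = ψ x := ((ψ.eq_iff).mpr (hN hx).2).symm

def extend (ρ : G →* K) (hρ : ρ.ker.FiniteIndex) : ProfiniteCompletion G →* K :=
  (QuotientGroup.kerLift ρ).comp (proj ⟨ρ.ker, inferInstance, hρ⟩)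

lemma extend_comp_iotaCompletion (ρ : G →* K) (hρ : ρ.ker.FiniteIndex) :
    (extend ρ hρ).comp (iotaCompletion G) = ρ := rfl

lemma isOpen_ker_extend (ρ : G →* K) (hρ : ρ.ker.FiniteIndex) :
    IsOpen ((extend ρ hρ).ker : Set (ProfiniteCompletion G)) := by
  rw [extend, MonoidHom.ker_comp_of_injective _ _ (QuotientGroup.kerLift_injective ρ)]
  exact isOpen_ker_proj _

lemma extend_comp_iotaCompletion_of_isOpen_ker (φ : ProfiniteCompletion G →* K)
    (hφ : IsOpen (φ.ker : Set (ProfiniteCompletion G)))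
    (h : (φ.comp (iotaCompletion G)).ker.FiniteIndex) :
    extend (φ.comp (iotaCompletion G)) h = φ :=
  hom_ext_of_isOpen_ker (isOpen_ker_extend _ h) hφ rfl

lemma finiteIndex_ker_comp_iotaCompletion {φ : ProfiniteCompletion G →* K}
    (hφ : IsOpen (φ.ker : Set (ProfiniteCompletion G))) :
    (φ.comp (iotaCompletion G)).ker.FiniteIndex := by
  obtain ⟨N, hN⟩ := exists_ker_proj_subset hφ φ.ker.one_mem
  have : N.1.FiniteIndex := N.2.2
  refine Subgroup.finiteIndex_of_le (H := N.1) fun g hg => hN ?_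
  rw [SetLike.mem_coe, (proj N).mem_ker, proj_iotaCompletion, QuotientGroup.eq_one_iff]
  exact hg

lemma comp_extend {K' : Type} [Group K'] (f : K →* K') (ρ : G →* K) (hρ : ρ.ker.FiniteIndex)
    (hfρ : (f.comp ρ).ker.FiniteIndex) : f.comp (extend ρ hρ) = extend (f.comp ρ) hfρ := by
  have hle : (extend ρ hρ).ker ≤ (f.comp (extend ρ hρ)).ker := fun x (hx : _ = 1) =>
    show f _ = 1 by rw [hx, map_one]
  exact hom_ext_of_isOpen_ker (Subgroup.isOpen_mono hle (isOpen_ker_extend ρ hρ))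
    (isOpen_ker_extend _ _) rfl

variable (G K) in
def homEquivOpenKer : {ρ : G →* K // ρ.ker.FiniteIndex} ≃
    {φ : ProfiniteCompletion G →* K // IsOpen (φ.ker : Set (ProfiniteCompletion G))} where
  toFun ρ := ⟨extend ρ.1 ρ.2, isOpen_ker_extend ρ.1 ρ.2⟩
  invFun φ := ⟨φ.1.comp (iotaCompletion G), finiteIndex_ker_comp_iotaCompletion φ.2⟩
  left_inv _ := rfl
  right_inv φ := Subtype.ext <|
    extend_comp_iotaCompletion_of_isOpen_ker φ.1 φ.2 (finiteIndex_ker_comp_iotaCompletion φ.2)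

variable {H : Type} [Group H]

def finiteIndexHomCongr (e : ProfiniteCompletion G ≃ₜ* ProfiniteCompletion H) :
    {ρ : G →* K // ρ.ker.FiniteIndex} ≃ {σ : H →* K // σ.ker.FiniteIndex} :=
  (homEquivOpenKer G K).trans ((openKerHomCongr e).trans (homEquivOpenKer H K).symm)

lemma finiteIndexHomCongr_comp (e : ProfiniteCompletion G ≃ₜ* ProfiniteCompletion H)
    (f : K →* K) (ρ : G →* K) (hρ : ρ.ker.FiniteIndex) (hfρ : (f.comp ρ).ker.FiniteIndex) :
    (finiteIndexHomCongr e ⟨f.comp ρ, hfρ⟩).1 =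
      f.comp (finiteIndexHomCongr e ⟨ρ, hρ⟩).1 := by
  show ((extend (f.comp ρ) hfρ).comp _).comp _ = f.comp (((extend ρ hρ).comp _).comp _)
  rw [← comp_extend f ρ hρ hfρ]
  rfl

end ProfiniteCompletion

section Conjugacy

open scoped MatrixGroups

variable {G H k : Type} [Group G] [Group H] [CommRing k]

lemma repConjSetoid_iff {ρ σ : G →* SL(2, k)} :
    repConjSetoid G k ρ σ ↔ ∃ C, (MulAut.conj C).toMonoidHom.comp ρ = σ :=
  exists_congr fun C => (MonoidHom.ext_iff (f := (MulAut.conj C).toMonoidHom.comp ρ)).symm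

def RepConjClasses.congr (Φ : (G →* SL(2, k)) ≃ (H →* SL(2, k)))
    (hΦ : ∀ C ρ,
      Φ ((MulAut.conj C).toMonoidHom.comp ρ) = (MulAut.conj C).toMonoidHom.comp (Φ ρ)) :
    RepConjClasses G k ≃ RepConjClasses H k :=
  Quotient.congr Φ fun ρ σ => by simp only [repConjSetoid_iff, ← hΦ, Φ.apply_eq_iff_eq]

end Conjugacy

open Matrix.SpecialLinearGroup ProfiniteCompletion MatrixGroups in
/-- If two finitely generated groups have isomorphic profinite completions, then their
sets of conjugacy classes of representations into `SL(2, 𝔽̄_p)` are in bijection. -/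
theorem repConjClasses_equiv_of_profinite_iso
    (Γ : Type) [Group Γ] (hΓ : Group.FG Γ) (Λ : Type) [Group Λ] (hΛ : Group.FG Λ)
    (e : ProfiniteCompletion Γ ≃* ProfiniteCompletion Λ)
    (he : Continuous e) (he' : Continuous e.symm)
    (p : ℕ) [Fact p.Prime] :
    Nonempty (RepConjClasses Γ (AlgebraicClosure (ZMod p)) ≃
      RepConjClasses Λ (AlgebraicClosure (ZMod p))) := by
  let eₜ : ProfiniteCompletion Γ ≃ₜ* ProfiniteCompletion Λ := ⟨e, he, he'⟩
  have finΓ (ρ : Γ →* SL(2, AlgebraicClosure (ZMod p))) :=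
    finiteIndex_ker_of_fg (F := ZMod p) hΓ ρ
  have finΛ (σ : Λ →* SL(2, AlgebraicClosure (ZMod p))) :=
    finiteIndex_ker_of_fg (F := ZMod p) hΛ σ
  let Φ := (Equiv.subtypeUnivEquiv finΓ).symm.trans
    ((finiteIndexHomCongr eₜ).trans (Equiv.subtypeUnivEquiv finΛ))
  exact ⟨RepConjClasses.congr Φ fun C ρ => finiteIndexHomCongr_comp eₜ _ ρ (finΓ ρ) _⟩
end

section
/- For a finitely generated group G and a prime p, precomposition with the canonical map ι: G → Ĝ gives a bijection between continuous homomorphisms Ĝ → SL(2, F̄_p) (with SL(2, F̄_p) discrete) and all homomorphisms G → SL(2, F̄_p). -/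
/-- Matrices in `SL(2,L)` with entries in an intermediate field form a subgroup. -/
def entriesSubgroup (F L : Type*) [Field F] [Field L] [Algebra F L]
    (K : IntermediateField F L) :
    Subgroup (Matrix.SpecialLinearGroup (Fin 2) L) where
  carrier := {A | ∀ i j, (A : Matrix (Fin 2) (Fin 2) L) i j ∈ K}
  one_mem' := by
    intro i j
    simp only [Matrix.SpecialLinearGroup.coe_one, Matrix.one_apply]
    split <;> [exact one_mem K; exact zero_mem K]
  mul_mem' := by
    intro A B hA hB i j
    simp only [Matrix.SpecialLinearGroup.coe_mul, Matrix.mul_apply]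
    exact sum_mem (fun k _ => mul_mem (hA _ _) (hB _ _))
  inv_mem' := by
    intro A hA i j
    rw [Matrix.SpecialLinearGroup.coe_inv, Matrix.adjugate_fin_two]
    fin_cases i <;> fin_cases j <;>
      simp only [Matrix.cons_val', Matrix.cons_val_zero, Matrix.cons_val_one,
        Matrix.head_cons, Matrix.head_fin_const, Matrix.empty_val',
        Matrix.cons_val_fin_one] <;>
      first
        | exact hA _ _
        | exact neg_mem (hA _ _)

lemma finite_fg_subgroup_SL2 (p : ℕ) [Fact p.Prime]
    (H : Subgroup (Matrix.SpecialLinearGroup (Fin 2) (AlgebraicClosure (ZMod p))))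
    (hH : H.FG) : Finite H := by
  obtain ⟨S, hS⟩ := hH
  set L := AlgebraicClosure (ZMod p)
  set E : Set L := ⋃ A ∈ S, Set.range
    (fun ij : Fin 2 × Fin 2 => (A : Matrix (Fin 2) (Fin 2) L) ij.1 ij.2) with hE
  have hEfin : E.Finite := Set.Finite.biUnion S.finite_toSet (fun A _ => Set.finite_range _)
  haveI : Finite E := hEfin.to_subtype
  set K := IntermediateField.adjoin (ZMod p) E with hK
  haveI : FiniteDimensional (ZMod p) K :=
    IntermediateField.finiteDimensional_adjoin fun x _ => Algebra.IsIntegral.isIntegral x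
  haveI : Finite K := Module.finite_of_finite (ZMod p)
  have hle : H ≤ entriesSubgroup (ZMod p) L K := by
    rw [← hS, Subgroup.closure_le]
    intro A hA i j
    exact IntermediateField.subset_adjoin _ _ (Set.mem_biUnion hA ⟨(i, j), rfl⟩)
  haveI : Finite (entriesSubgroup (ZMod p) L K) := by
    have hemb : Function.Injective
        (fun A : entriesSubgroup (ZMod p) L K =>
          (fun i j => (⟨(A.1 : Matrix (Fin 2) (Fin 2) L) i j, A.2 i j⟩ : K) :
            Matrix (Fin 2) (Fin 2) K)) := by
      intro A B h
      apply Subtype.ext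
      apply Matrix.SpecialLinearGroup.ext
      intro i j
      exact congrArg Subtype.val (congrFun (congrFun h i) j)
    exact Finite.of_injective _ hemb
  exact Finite.of_injective (Subgroup.inclusion hle) (Subgroup.inclusion_injective hle)

lemma mem_iInf_normal {G : Type} [Group G] (I : Finset (FinIndexNormal G)) :
    (⨅ i ∈ I, (i : FinIndexNormal G).1).Normal := by
  constructor
  intro n hn g
  simp only [Subgroup.mem_iInf] at hn ⊢
  intro i hi
  exact (i.2.1).conj_mem n (hn i hi) g

lemma denseRange_iota (G : Type) [Group G] : DenseRange (iotaCompletion G) := by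
  rw [denseRange_iff_closure_range, ← Set.univ_subset_iff]
  intro x _
  rw [mem_closure_iff]
  intro U hU hxU
  obtain ⟨V, hV, rfl⟩ := isOpen_induced_iff.mp hU
  obtain ⟨I, u, hu, hsub⟩ := isOpen_pi_iff.mp hV x.1 hxU
  haveI : (⨅ i ∈ I, (i : FinIndexNormal G).1).FiniteIndex :=
    Subgroup.finiteIndex_iInf' _ (fun i _ => i.2.2)
  set N₀ : FinIndexNormal G := ⟨⨅ i ∈ I, (i : FinIndexNormal G).1,
    mem_iInf_normal I, inferInstance⟩ with hN₀
  obtain ⟨g, hg⟩ := QuotientGroup.mk_surjective (x.1 N₀)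
  refine ⟨iotaCompletion G g, ?_, ⟨g, rfl⟩⟩
  show (iotaCompletion G g).1 ∈ V
  apply hsub
  intro i hi
  have hle : N₀.1 ≤ i.1 := by
    rw [hN₀]
    exact biInf_le _ hi
  have := x.2 i N₀ hle
  rw [← hg] at this
  have : x.1 i = QuotientGroup.mk g := by
    rw [← this]; rfl
  show (iotaCompletion G g).1 i ∈ u i
  have h2 : (iotaCompletion G g).1 i = x.1 i := by rw [this]; rfl
  rw [h2]
  exact (hu i hi).2

/-- For a finitely generated group `G`, precomposition with `ι : G → Ĝ` is a bijection
from continuous homomorphisms `Ĝ → SL(2, 𝔽̄_p)` (with `SL(2, 𝔽̄_p)` discrete) to all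
homomorphisms `G → SL(2, 𝔽̄_p)`. -/
theorem precomp_iota_bijective_continuous_homs
    (G : Type) [Group G] (hG : Group.FG G) (p : ℕ) [Fact p.Prime] :
    Function.Bijective
      (fun φ : {f : ProfiniteCompletion G →*
            Matrix.SpecialLinearGroup (Fin 2) (AlgebraicClosure (ZMod p)) //
            @Continuous _ _ _ ⊥ f} =>
        φ.1.comp (iotaCompletion G)) := by
  letI : TopologicalSpace (Matrix.SpecialLinearGroup (Fin 2) (AlgebraicClosure (ZMod p))) := ⊥
  haveI : DiscreteTopology
      (Matrix.SpecialLinearGroup (Fin 2) (AlgebraicClosure (ZMod p))) := ⟨rfl⟩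
  constructor
  · rintro ⟨f, hf⟩ ⟨f', hf'⟩ h
    have heq : Set.EqOn f f' (Set.range (iotaCompletion G)) := by
      rintro _ ⟨g, rfl⟩
      exact DFunLike.congr_fun h g
    have : (f : ProfiniteCompletion G → _) = f' :=
      Continuous.ext_on (denseRange_iota G) hf hf' heq
    exact Subtype.ext (MonoidHom.ext fun x => congrFun this x)
  · intro f
    haveI : Finite f.range := by
      have hfg : (f.range).FG := (Group.fg_iff_subgroup_fg f.range).mp (Group.fg_range f)
      exact finite_fg_subgroup_SL2 p f.range hfg
    haveI : f.ker.FiniteIndex := Subgroup.finiteIndex_ker f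
    set N : FinIndexNormal G := ⟨f.ker, f.normal_ker, inferInstance⟩ with hN
    -- the projection to the `N`-th coordinate
    let proj : ProfiniteCompletion G →* G ⧸ N.1 :=
      (Pi.evalMonoidHom (fun M : FinIndexNormal G => G ⧸ M.1) N).comp
        (profiniteCompletionSubgroup G).subtype
    let lift : G ⧸ N.1 →* _ := QuotientGroup.lift f.ker f (fun x hx => hx)
    letI : TopologicalSpace (G ⧸ N.1) := ⊥
    refine ⟨⟨lift.comp proj, ?_⟩, ?_⟩
    · have hproj : Continuous proj := by
        exact (continuous_apply N).comp continuous_subtype_val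
      haveI : DiscreteTopology (G ⧸ N.1) := ⟨rfl⟩
      exact (continuous_of_discreteTopology (f := (lift : G ⧸ N.1 → _))).comp hproj
    · ext g
      rfl
end

section
/- A first-order sentence Σ in the language of rings holds in some algebraically closed field of characteristic 0 if and only if it holds in algebraically closed fields of characteristic p for all but finitely many primes p. -/
open FirstOrder Language Ring

/-- The Lefschetz principle: a first-order sentence in the language of rings holds in
some algebraically closed field of characteristic zero if and only if it holds in
algebraically closed fields of characteristic `p` for all but finitely many primes `p`. -/
theorem lefschetz_some_char_zero_iff_cofinitely_many_primes
    (φ : Language.ring.Sentence) :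
    (∃ (K : Type) (_ : Field K) (_ : IsAlgClosed K) (_ : CharZero K)
        (_ : CompatibleRing K), K ⊨ φ) ↔
      Set.Finite {p : Nat.Primes | Theory.ACF p ⊨ᵇ φ}ᶜ := by
  rw [← Field.ACF_zero_realize_iff_finite_ACF_prime_not_realize]
  constructor
  · rintro ⟨K, _, _, _, _, hK⟩
    have : CharP K 0 := CharP.ofCharZero K
    have hmod : (Theory.ACF 0).Model K := inferInstance
    rcases (Field.ACF_isComplete (Or.inr rfl)).2 φ with h | h
    · exact h
    · exact absurd hK (by simpa using h.realize_sentence K)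
  · intro h
    let _ := compatibleRingOfRing (AlgebraicClosure ℚ)
    refine ⟨AlgebraicClosure ℚ, inferInstance, inferInstance, inferInstance, inferInstance, ?_⟩
    have : CharP (AlgebraicClosure ℚ) 0 :=
      charP_of_injective_algebraMap
        (RingHom.injective (algebraMap ℚ (AlgebraicClosure ℚ))) 0
    have hmod : (Theory.ACF 0).Model (AlgebraicClosure ℚ) := inferInstance
    exact h.realize_sentence _
end

section
/- If a first-order sentence Σ in the language of rings holds in algebraically closed fields of characteristic p for infinitely many primes p, then Σ holds in ℂ. -/
open FirstOrder Language Ring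

/-- If a first-order sentence in the language of rings holds in algebraically closed
fields of characteristic `p` for infinitely many primes `p`, then it holds in `ℂ`. -/
theorem realize_complex_of_infinite_ACF_prime_realize (φ : Language.ring.Sentence)
    (h : Set.Infinite {p : Nat.Primes | Theory.ACF p ⊨ᵇ φ}) :
    letI := compatibleRingOfRing ℂ
    ℂ ⊨ φ := by
  letI := compatibleRingOfRing ℂ
  have h0 : Theory.ACF 0 ⊨ᵇ φ :=
    (Field.ACF_zero_realize_iff_infinite_ACF_prime_realize).2 h
  have : (Theory.ACF 0).Model ℂ := inferInstance
  exact h0.realize_sentence ℂ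
end
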